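/- The function q ↦ Ψ(q)/q is concave on (0,∞). -/
import Mathlib


open MeasureTheory

/-- `s ∈ P_m`: `s = (s₀,s₁,s₂,…)` with `s₀ ≥ 0`, `s₁ ≥ s₂ ≥ … ≥ 0`, and
`Σ_{i≥0} s_i ≤ 1`. -/
def MemPm (s : ℕ → ℝ) : Prop :=
  (∀ i, 0 ≤ s i) ∧ (∀ i, 1 ≤ i → s (i + 1) ≤ s i) ∧ Summable s ∧ ∑' i, s i ≤ 1

/-- `Ψ(q) = c₀q + (c₁/2)q² + ∫_{P_m} (q s₀ + Σ_{i≥1} (e^{−q s_i} − 1 + q s_i)) ν(ds)`. -/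
noncomputable def Psi (c₀ c₁ : ℝ) (ν : Measure (ℕ → ℝ)) (q : ℝ) : ℝ :=
  c₀ * q + c₁ / 2 * q ^ 2
    + ∫ s, (q * s 0 + ∑' i : ℕ, (Real.exp (-(q * s (i + 1))) - 1 + q * s (i + 1))) ∂ν

namespace PsiAux

lemma g_nonneg (q a : ℝ) : 0 ≤ Real.exp (-(q*a)) - 1 + q*a := by
  have := Real.add_one_le_exp (-(q*a)); linarith

lemma g_le (q a : ℝ) (hq : 0 ≤ q) (ha : 0 ≤ a) :
    Real.exp (-(q*a)) - 1 + q*a ≤ (q*a)^2 := by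
  set x := q*a with hx
  have hx0 : 0 ≤ x := mul_nonneg hq ha
  rcases le_or_gt x 1 with h1 | h1
  · have habs : |(-x)| ≤ 1 := by rwa [abs_neg, abs_of_nonneg hx0]
    have h2 := (abs_le.1 (Real.abs_exp_sub_one_sub_id_le habs)).2
    nlinarith [h2]
  · have hle : Real.exp (-x) ≤ 1 := Real.exp_le_one_iff.2 (by linarith)
    nlinarith

lemma rep (q a : ℝ) (hq : 0 < q) :
    ∫ x in (0:ℝ)..a, Real.exp (-(q*x)) = (1 - Real.exp (-(q*a)))/q := by
  have hq' : (-q) ≠ 0 := by intro h; linarith [neg_eq_zero.1 h]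
  have h1 : (fun x : ℝ => Real.exp (-(q*x))) = fun x : ℝ => Real.exp ((-q)*x) := by
    funext x; ring_nf
  rw [h1, intervalIntegral.integral_comp_mul_left Real.exp hq']
  rw [mul_zero, integral_exp, Real.exp_zero, smul_eq_mul]
  have : (-q) * a = -(q*a) := by ring
  rw [this]
  field_simp
  ring

lemma f_concave (a : ℝ) (ha : 0 ≤ a) {q r t u : ℝ}
    (hq : 0 < q) (hr : 0 < r) (ht : 0 ≤ t) (hu : 0 ≤ u) (htu : t + u = 1) :
    t * ((Real.exp (-(q*a)) - 1 + q*a)/q) + u * ((Real.exp (-(r*a)) - 1 + r*a)/r)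
      ≤ (Real.exp (-((t*q+u*r)*a)) - 1 + (t*q+u*r)*a)/(t*q+u*r) := by
  have hp : 0 < t*q + u*r := by
    by_cases h : t = 0
    · have hu1 : u = 1 := by linarith
      rw [h, hu1]; simpa using hr
    · have ht' : 0 < t := lt_of_le_of_ne ht (Ne.symm h)
      nlinarith [mul_pos ht' hq, mul_nonneg hu hr.le]
  have key : ∀ {c : ℝ}, 0 < c → (Real.exp (-(c*a)) - 1 + c*a)/c
      = a - ∫ x in (0:ℝ)..a, Real.exp (-(c*x)) := by
    intro c hc
    rw [rep c a hc]
    field_simp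
    ring
  have hInt : ∀ c : ℝ, IntervalIntegrable (fun x => Real.exp (-(c*x))) volume 0 a :=
    fun c => Continuous.intervalIntegrable (by continuity) 0 a
  have hIntc : IntervalIntegrable
      (fun x => t * Real.exp (-(q*x)) + u * Real.exp (-(r*x))) volume 0 a :=
    ((hInt q).const_mul t).add ((hInt r).const_mul u)
  have hmono : ∫ x in (0:ℝ)..a, Real.exp (-((t*q+u*r)*x))
      ≤ ∫ x in (0:ℝ)..a, (t * Real.exp (-(q*x)) + u * Real.exp (-(r*x))) := by
    apply intervalIntegral.integral_mono_on ha (hInt _) hIntc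
    intro x _
    have := convexOn_exp.2 (Set.mem_univ (-(q*x))) (Set.mem_univ (-(r*x))) ht hu htu
    simp only [smul_eq_mul] at this
    have heq : t * -(q*x) + u * -(r*x) = -((t*q+u*r)*x) := by ring
    rw [heq] at this
    exact this
  have hsplit : ∫ x in (0:ℝ)..a, (t * Real.exp (-(q*x)) + u * Real.exp (-(r*x)))
      = t * (∫ x in (0:ℝ)..a, Real.exp (-(q*x)))
        + u * (∫ x in (0:ℝ)..a, Real.exp (-(r*x))) := by
    rw [intervalIntegral.integral_add ((hInt q).const_mul t) ((hInt r).const_mul u),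
      intervalIntegral.integral_const_mul, intervalIntegral.integral_const_mul]
  rw [key hq, key hr, key hp]
  rw [hsplit] at hmono
  have e1 : t*(a - ∫ x in (0:ℝ)..a, Real.exp (-(q*x)))
      + u*(a - ∫ x in (0:ℝ)..a, Real.exp (-(r*x)))
      = (t+u)*a - (t*(∫ x in (0:ℝ)..a, Real.exp (-(q*x)))
        + u*(∫ x in (0:ℝ)..a, Real.exp (-(r*x)))) := by ring
  rw [htu, one_mul] at e1
  rw [e1]
  linarith

lemma tsum_toReal_eq {f : ℕ → ℝ} (hf : ∀ n, 0 ≤ f n) :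
    ∑' n, f n = (∑' n, ENNReal.ofReal (f n)).toReal := by
  by_cases h : Summable f
  · rw [← ENNReal.ofReal_tsum_of_nonneg hf h, ENNReal.toReal_ofReal (tsum_nonneg hf)]
  · rw [tsum_eq_zero_of_not_summable h]
    by_cases htop : (∑' n, ENNReal.ofReal (f n)) = ⊤
    · simp [htop]
    · exact absurd ((ENNReal.summable_toReal htop).congr
        (fun n => ENNReal.toReal_ofReal (hf n))) h

lemma meas_tsum {α : Type*} [MeasurableSpace α] {g : ℕ → α → ℝ}
    (hg : ∀ i, Measurable (g i)) (hg0 : ∀ i x, 0 ≤ g i x) :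
    Measurable (fun x => ∑' i, g i x) := by
  have h : (fun x => ∑' i, g i x) = fun x => (∑' i, ENNReal.ofReal (g i x)).toReal := by
    funext x; exact tsum_toReal_eq (fun n => hg0 n x)
  rw [h]
  exact (Measurable.ennreal_tsum fun i => (hg i).ennreal_ofReal).ennreal_toReal

/-- The summand appearing in `Psi`, divided by `q`. -/
noncomputable def f (q a : ℝ) : ℝ := (Real.exp (-(q*a)) - 1 + q*a)/q

lemma f_nonneg {q : ℝ} (hq : 0 < q) (a : ℝ) : 0 ≤ f q a :=
  div_nonneg (g_nonneg q a) hq.le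

lemma f_le {q : ℝ} (hq : 0 < q) {a : ℝ} (ha : 0 ≤ a) : f q a ≤ q * a^2 := by
  rw [f, div_le_iff₀ hq]
  calc Real.exp (-(q*a)) - 1 + q*a ≤ (q*a)^2 := g_le q a hq.le ha
    _ = q * a^2 * q := by ring

lemma sq_summable {s : ℕ → ℝ} (hs : MemPm s) : Summable (fun i => (s (i+1))^2) := by
  obtain ⟨h0, _, hsum, hle⟩ := hs
  have h1 : ∀ i, s i ≤ 1 := fun i => le_trans (Summable.le_tsum hsum i fun j _ => h0 j) hle
  have hsum' : Summable (fun i => s (i+1)) := (summable_nat_add_iff 1).2 hsum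
  refine Summable.of_nonneg_of_le (fun i => sq_nonneg _) (fun i => ?_) hsum'
  nlinarith [h0 (i+1), h1 (i+1)]

lemma f_summable {s : ℕ → ℝ} (hs : MemPm s) {q : ℝ} (hq : 0 < q) :
    Summable (fun i => f q (s (i+1))) :=
  Summable.of_nonneg_of_le (fun i => f_nonneg hq _)
    (fun i => f_le hq (hs.1 (i+1))) ((sq_summable hs).mul_left q)

lemma tsum_f_le {s : ℕ → ℝ} (hs : MemPm s) {q : ℝ} (hq : 0 < q) :
    ∑' i, f q (s (i+1)) ≤ q * ∑' i, (s (i+1))^2 := by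
  rw [← tsum_mul_left]
  exact Summable.tsum_le_tsum (fun i => f_le hq (hs.1 (i+1))) (f_summable hs hq)
    ((sq_summable hs).mul_left q)

/-- The integrand of `Psi q / q`. -/
noncomputable def G (q : ℝ) (s : ℕ → ℝ) : ℝ := s 0 + ∑' i, f q (s (i+1))

lemma G_measurable {q : ℝ} (hq : 0 < q) : Measurable (G q) := by
  apply (measurable_pi_apply 0).add
  apply meas_tsum
  · intro i
    apply Measurable.div_const
    have h1 : Measurable (fun s : ℕ → ℝ => s (i+1)) := measurable_pi_apply (i+1)
    fun_prop
  · intro i x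
    exact f_nonneg hq _

lemma G_integrable {ν : Measure (ℕ → ℝ)} (hν : ν {s | ¬ MemPm s} = 0)
    (hint : ∫⁻ s, ENNReal.ofReal (s 0 + ∑' i : ℕ, (s (i + 1)) ^ 2) ∂ν ≠ ⊤)
    {q : ℝ} (hq : 0 < q) : Integrable (G q) ν := by
  have hae : ∀ᵐ s ∂ν, MemPm s := by
    rw [ae_iff]; exact hν
  refine ⟨(G_measurable hq).aestronglyMeasurable, ?_⟩
  rw [hasFiniteIntegral_iff_norm]
  have hbd : ∀ᵐ s ∂ν, ENNReal.ofReal ‖G q s‖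
      ≤ ENNReal.ofReal (1+q) * ENNReal.ofReal (s 0 + ∑' i : ℕ, (s (i + 1)) ^ 2) := by
    filter_upwards [hae] with s hs
    have hT : 0 ≤ ∑' i : ℕ, (s (i+1))^2 := tsum_nonneg fun i => sq_nonneg _
    have h0 : 0 ≤ s 0 := hs.1 0
    have hG0 : 0 ≤ G q s := add_nonneg h0 (tsum_nonneg fun i => f_nonneg hq _)
    have hGle : G q s ≤ (1+q) * (s 0 + ∑' i : ℕ, (s (i+1))^2) := by
      have := tsum_f_le hs hq
      rw [G]
      nlinarith [mul_nonneg hq.le h0]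
    rw [Real.norm_eq_abs, abs_of_nonneg hG0, ← ENNReal.ofReal_mul (by linarith)]
    exact ENNReal.ofReal_le_ofReal hGle
  calc ∫⁻ s, ENNReal.ofReal ‖G q s‖ ∂ν
      ≤ ∫⁻ s, ENNReal.ofReal (1+q) * ENNReal.ofReal (s 0 + ∑' i : ℕ, (s (i + 1)) ^ 2) ∂ν :=
        lintegral_mono_ae hbd
    _ = ENNReal.ofReal (1+q) * ∫⁻ s, ENNReal.ofReal (s 0 + ∑' i : ℕ, (s (i + 1)) ^ 2) ∂ν :=
        lintegral_const_mul' _ _ ENNReal.ofReal_ne_top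
    _ < ⊤ := ENNReal.mul_lt_top ENNReal.ofReal_lt_top (lt_top_iff_ne_top.2 hint)

lemma G_concave {s : ℕ → ℝ} (hs : MemPm s) {q r t u : ℝ}
    (hq : 0 < q) (hr : 0 < r) (ht : 0 ≤ t) (hu : 0 ≤ u) (htu : t + u = 1) :
    t * G q s + u * G r s ≤ G (t*q + u*r) s := by
  have hp : 0 < t*q + u*r := by
    by_cases h : t = 0
    · have hu1 : u = 1 := by linarith
      rw [h, hu1]; simpa using hr
    · have ht' : 0 < t := lt_of_le_of_ne ht (Ne.symm h)
      nlinarith [mul_pos ht' hq, mul_nonneg hu hr.le]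
  have hsum : ∑' i, (t * f q (s (i+1)) + u * f r (s (i+1)))
      = t * ∑' i, f q (s (i+1)) + u * ∑' i, f r (s (i+1)) := by
    rw [Summable.tsum_add ((f_summable hs hq).mul_left t) ((f_summable hs hr).mul_left u),
      tsum_mul_left, tsum_mul_left]
  have hle : ∑' i, (t * f q (s (i+1)) + u * f r (s (i+1)))
      ≤ ∑' i, f (t*q+u*r) (s (i+1)) := by
    refine Summable.tsum_le_tsum (fun i => ?_)
      (((f_summable hs hq).mul_left t).add ((f_summable hs hr).mul_left u))
      (f_summable hs hp)
    exact f_concave (s (i+1)) (hs.1 (i+1)) hq hr ht hu htu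
  rw [G, G, G]
  rw [hsum] at hle
  have : t * (s 0 + ∑' i, f q (s (i+1))) + u * (s 0 + ∑' i, f r (s (i+1)))
      = (t+u) * s 0 + (t * ∑' i, f q (s (i+1)) + u * ∑' i, f r (s (i+1))) := by ring
  rw [this, htu, one_mul]
  linarith

lemma Psi_div_eq (c₀ c₁ : ℝ) (ν : Measure (ℕ → ℝ)) {q : ℝ} (hq : 0 < q) :
    Psi c₀ c₁ ν q / q = c₀ + c₁ / 2 * q + ∫ s, G q s ∂ν := by
  have hq' : q ≠ 0 := hq.ne'
  rw [Psi, add_div, add_div, mul_div_assoc c₀, div_self hq', mul_one]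
  congr 1
  · congr 1
    rw [pow_two, ← mul_assoc, mul_div_assoc, div_self hq', mul_one]
  · have h1 : (∫ s, (q * s 0 + ∑' i : ℕ,
        (Real.exp (-(q * s (i + 1))) - 1 + q * s (i + 1))) ∂ν) / q
        = q⁻¹ • ∫ s, (q * s 0 + ∑' i : ℕ,
        (Real.exp (-(q * s (i + 1))) - 1 + q * s (i + 1))) ∂ν := by
      rw [smul_eq_mul, div_eq_inv_mul]
    rw [h1, ← integral_smul]
    congr 1
    funext s
    rw [smul_eq_mul, mul_add, ← mul_assoc, inv_mul_cancel₀ hq', one_mul, G]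
    congr 1
    rw [← tsum_mul_left]
    congr 1
    funext i
    rw [f, div_eq_inv_mul]

end PsiAux

/-- Let `c₀, c₁ ≥ 0` and let `ν` be a measure carried on `P_m` with
`∫ (s₀ + Σ_{i≥1} s_i²) ν(ds) < ∞`.  The function `q ↦ Ψ(q)/q` is concave on `(0,∞)`. -/
theorem Psi_div_concave
    (c₀ c₁ : ℝ) (hc₀ : 0 ≤ c₀) (hc₁ : 0 ≤ c₁)
    (ν : Measure (ℕ → ℝ)) (hν : ν {s | ¬ MemPm s} = 0)
    (hint : ∫⁻ s, ENNReal.ofReal (s 0 + ∑' i : ℕ, (s (i + 1)) ^ 2) ∂ν ≠ ⊤) :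
    ConcaveOn ℝ (Set.Ioi (0 : ℝ)) (fun q => Psi c₀ c₁ ν q / q) := by
  open PsiAux in
  constructor
  · exact convex_Ioi 0
  · intro x hx y hy t u ht hu htu
    have hx' : (0:ℝ) < x := hx
    have hy' : (0:ℝ) < y := hy
    have hp : 0 < t*x + u*y := by
      by_cases h : t = 0
      · have hu1 : u = 1 := by linarith
        rw [h, hu1]; simpa using hy'
      · have ht' : 0 < t := lt_of_le_of_ne ht (Ne.symm h)
        nlinarith [mul_pos ht' hx', mul_nonneg hu hy'.le]
    have hae : ∀ᵐ s ∂ν, MemPm s := by rw [ae_iff]; exact hν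
    simp only [smul_eq_mul]
    rw [PsiAux.Psi_div_eq c₀ c₁ ν hx', PsiAux.Psi_div_eq c₀ c₁ ν hy',
      PsiAux.Psi_div_eq c₀ c₁ ν hp]
    have hIx := PsiAux.G_integrable hν hint hx'
    have hIy := PsiAux.G_integrable hν hint hy'
    have hIp := PsiAux.G_integrable hν hint hp
    have hintle : t * (∫ s, PsiAux.G x s ∂ν) + u * (∫ s, PsiAux.G y s ∂ν)
        ≤ ∫ s, PsiAux.G (t*x+u*y) s ∂ν := by
      have h1 : t * (∫ s, PsiAux.G x s ∂ν) + u * (∫ s, PsiAux.G y s ∂ν)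
          = ∫ s, (t * PsiAux.G x s + u * PsiAux.G y s) ∂ν := by
        rw [integral_add (hIx.const_mul t) (hIy.const_mul u),
          integral_const_mul, integral_const_mul]
      rw [h1]
      refine integral_mono_ae ((hIx.const_mul t).add (hIy.const_mul u)) hIp ?_
      filter_upwards [hae] with s hs
      exact PsiAux.G_concave hs hx' hy' ht hu htu
    have e1 : t * (c₀ + c₁ / 2 * x + ∫ s, PsiAux.G x s ∂ν)
        + u * (c₀ + c₁ / 2 * y + ∫ s, PsiAux.G y s ∂ν)
        = (t+u) * c₀ + c₁ / 2 * (t*x + u*y)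
          + (t * (∫ s, PsiAux.G x s ∂ν) + u * (∫ s, PsiAux.G y s ∂ν)) := by ring
    rw [e1, htu, one_mul]
    linarith
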